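/- Let x(t) = (x₁(t),…,x_N(t)) solve ẋ_i = K Σ_{j∈N_i} A_{ij}(x_j - x_i) - α(t)(h_i h_iᵀ x_i - z_i h_i) over a fixed connected graph with Laplacian L, where x(t) is bounded, α(t) → 0, and K > 0. Let x̄(t) = (1/N)Σ_i x_i(t). Then lim_{t→∞} ‖x(t) - 1_N ⊗ x̄(t)‖ = 0, i.e., the flow achieves consensus. -/

import Mathlib

/-!
Each coordinate `k` of the flow is a scalar consensus flow `ẋ = -K L x + u(t)` with perturbation
`u_i = -α(t) ((h_i ⬝ x_i) h_ik - z_i h_ik)`, which tends to `0` because `α → 0` and `x` is bounded.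
The disagreement `d = x - 1 x̄` sums to zero, so `V = ‖d‖²` satisfies
`V' = 2 ⟨d, ẋ⟩ = -2K dᵀ L d + 2 ⟨d, u⟩ ≤ -2Kλ V + β(t)` with `β → 0`. Here `λ > 0` is the minimum of
`dᵀ L d` on the unit sphere of the zero-sum subspace, positive because on a connected graph
`dᵀ L d = 0` forces `d` to be constant. Finally `V' ≤ -cV + β` with `β → 0` forces `V → 0`.
-/

open Filter Topology

theorem tendsto_zero_of_hasDerivAt_le_neg_mul_add {V V' β : ℝ → ℝ} {c : ℝ} (hc : 0 < c)
    (hV : ∀ᶠ t in atTop, HasDerivAt V (V' t) t ∧ V' t ≤ -c * V t + β t)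
    (hV₀ : ∀ᶠ t in atTop, 0 ≤ V t) (hβ : Tendsto β atTop (𝓝 0)) :
    Tendsto V atTop (𝓝 0) := by
  refine tendsto_order.2 ⟨fun a ha => hV₀.mono fun t ht => ha.trans_le ht, fun ε hε => ?_⟩
  obtain ⟨T, hT⟩ :=
    (hV.and (hβ.eventually (gt_mem_nhds (by positivity : 0 < c * (ε / 2))))).exists_forall_of_atTop
  -- Once `β < cε/2`, the function `e^{ct} (V t - ε/2)` is antitone.
  set g : ℝ → ℝ := fun t => Real.exp (c * t) * (V t - ε / 2)
  have hg : ∀ t ≥ T, HasDerivAt g (Real.exp (c * t) * (c * (V t - ε / 2) + V' t)) t := by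
    intro t ht
    refine (((hasDerivAt_id t).const_mul c).exp.fun_mul
      ((hT t ht).1.1.sub_const (ε / 2))).congr_deriv ?_
    simp only [id, mul_one]
    ring
  have hg_anti : AntitoneOn g (Set.Ici T) := by
    refine antitoneOn_of_hasDerivWithinAt_nonpos (convex_Ici T)
      (fun t ht => (hg t ht).continuousAt.continuousWithinAt)
      (fun t ht => (hg t (interior_subset ht)).hasDerivWithinAt) fun t ht => ?_
    obtain ⟨⟨-, hle⟩, hβt⟩ := hT t (interior_subset ht)
    exact mul_nonpos_of_nonneg_of_nonpos (Real.exp_pos _).le (by nlinarith)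
  have hbound : ∀ t ≥ T, V t ≤ ε / 2 + Real.exp (-(c * (t - T))) * (V T - ε / 2) := by
    intro t ht
    have hgt := mul_le_mul_of_nonneg_left (hg_anti Set.self_mem_Ici (Set.mem_Ici.2 ht) ht)
      (Real.exp_pos (-(c * t))).le
    simp only [g, ← mul_assoc, ← Real.exp_add] at hgt
    rw [neg_add_cancel, Real.exp_zero, one_mul, show -(c * t) + c * T = -(c * (t - T)) by ring]
      at hgt
    linarith
  have hdecay : Tendsto (fun t => ε / 2 + Real.exp (-(c * (t - T))) * (V T - ε / 2)) atTop
      (𝓝 (ε / 2)) := by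
    have hlin : Tendsto (fun t => c * (t - T)) atTop atTop := by
      simpa [sub_eq_add_neg] using
        (tendsto_atTop_add_const_right _ (-T) tendsto_id).const_mul_atTop hc
    simpa using tendsto_const_nhds.add
      ((Real.tendsto_exp_neg_atTop_nhds_zero.comp hlin).mul_const (V T - ε / 2))
  filter_upwards [eventually_ge_atTop T, hdecay.eventually (gt_mem_nhds (half_lt_self hε))]
    with t ht hlt
  exact (hbound t ht).trans_lt hlt

theorem isBoundedUnder_norm_comp_of_eventually_mem {α E F : Type*} [TopologicalSpace E]
    [SeminormedAddGroup F] {l : Filter α} {s : Set E} (hs : IsCompact s) {f : E → F}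
    (hf : ContinuousOn f s) {g : α → E} (hg : ∀ᶠ a in l, g a ∈ s) :
    IsBoundedUnder (· ≤ ·) l (fun a => ‖f (g a)‖) :=
  let ⟨C, hC⟩ := hs.exists_bound_of_continuousOn hf
  ⟨C, eventually_map.2 (hg.mono fun _ ha => hC _ ha)⟩

theorem exists_pos_mul_norm_sq_le {E : Type*} [NormedAddCommGroup E] [NormedSpace ℝ E]
    [ProperSpace E] {Q : E → ℝ} {S : Set E} (hQ : Continuous Q)
    (hQ_smul : ∀ (c : ℝ) v, Q (c • v) = c ^ 2 * Q v) (hS : IsClosed S)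
    (hS_smul : ∀ (c : ℝ), ∀ v ∈ S, c • v ∈ S) (hQ_pos : ∀ v ∈ S, v ≠ 0 → 0 < Q v) :
    ∃ lam > 0, ∀ v ∈ S, lam * ‖v‖ ^ 2 ≤ Q v := by
  have hQ_zero : Q 0 = 0 := by simpa using hQ_smul 0 0
  have hunit : ∀ v ∈ S, v ≠ 0 → ‖v‖⁻¹ • v ∈ S ∩ Metric.sphere 0 1 := fun v hv hv0 =>
    ⟨hS_smul _ v hv, by simp [norm_smul, hv0]⟩
  rcases (S ∩ Metric.sphere (0 : E) 1).eq_empty_or_nonempty with hempty | hne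
  · refine ⟨1, one_pos, fun v hv => ?_⟩
    obtain rfl : v = 0 := by
      by_contra hv0
      exact hempty.subset (hunit v hv hv0)
    simp [hQ_zero]
  obtain ⟨u, hu, hmin⟩ :=
    ((isCompact_sphere 0 1).inter_left hS).exists_isMinOn hne hQ.continuousOn
  refine ⟨Q u, hQ_pos u hu.1 (ne_zero_of_mem_unit_sphere ⟨u, hu.2⟩), fun v hv => ?_⟩
  rcases eq_or_ne v 0 with rfl | hv0
  · simp [hQ_zero]
  calc Q u * ‖v‖ ^ 2 ≤ Q (‖v‖⁻¹ • v) * ‖v‖ ^ 2 := by gcongr; exact hmin (hunit v hv hv0)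
    _ = Q v := by
      rw [hQ_smul, mul_right_comm, ← mul_pow, inv_mul_cancel₀ (norm_ne_zero_iff.2 hv0), one_pow,
        one_mul]

section DirichletEnergy

variable {ι : Type*} [Fintype ι] (A : Matrix ι ι ℝ)

/-- The quadratic form `vᵀ L v` of the Laplacian `L` of the weighted graph with weights `A`. -/
noncomputable def dirichletEnergy (v : ι → ℝ) : ℝ := (∑ i, ∑ j, A i j * (v i - v j) ^ 2) / 2

theorem continuous_dirichletEnergy : Continuous (dirichletEnergy A) := by
  unfold dirichletEnergy; fun_prop

theorem dirichletEnergy_smul (c : ℝ) (v : ι → ℝ) :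
    dirichletEnergy A (c • v) = c ^ 2 * dirichletEnergy A v := by
  simp only [dirichletEnergy, Pi.smul_apply, smul_eq_mul, Finset.mul_sum, mul_div_assoc']
  congr 1
  refine Finset.sum_congr rfl fun i _ => Finset.sum_congr rfl fun j _ => ?_
  ring

theorem sum_mul_sum_sub_eq_neg_dirichletEnergy (hA : ∀ i j, A i j = A j i) (v : ι → ℝ) :
    ∑ i, v i * ∑ j, A i j * (v j - v i) = -dirichletEnergy A v := by
  have hswap : ∑ i, ∑ j, A i j * v j ^ 2 = ∑ i, ∑ j, A i j * v i ^ 2 := by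
    rw [Finset.sum_comm]
    simp only [hA]
  have hexpand : ∀ i j, A i j * (v i - v j) ^ 2 =
      A i j * v i ^ 2 + A i j * v j ^ 2 - (v i * (A i j * v j) + v i * (A i j * v j)) :=
    fun i j => by ring
  have hprod : ∀ i j, v i * (A i j * (v j - v i)) = v i * (A i j * v j) - A i j * v i ^ 2 :=
    fun i j => by ring
  simp only [dirichletEnergy, Finset.mul_sum, hexpand, hprod, Finset.sum_sub_distrib,
    Finset.sum_add_distrib, hswap]
  ring

variable {A}

theorem dirichletEnergy_nonneg (hA : ∀ i j, 0 ≤ A i j) (v : ι → ℝ) : 0 ≤ dirichletEnergy A v :=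
  div_nonneg (Finset.sum_nonneg fun i _ => Finset.sum_nonneg fun j _ =>
    mul_nonneg (hA i j) (sq_nonneg _)) zero_le_two

theorem apply_eq_of_dirichletEnergy_eq_zero (hA : ∀ i j, 0 ≤ A i j) {G : SimpleGraph ι}
    (hG : ∀ i j, G.Adj i j → 0 < A i j) (hconn : G.Connected) {v : ι → ℝ}
    (hv : dirichletEnergy A v = 0) (i j : ι) : v i = v j := by
  have hterms : ∀ i j, A i j * (v i - v j) ^ 2 = 0 := by
    have hsum : ∑ i, ∑ j, A i j * (v i - v j) ^ 2 = 0 := by simpa [dirichletEnergy] using hv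
    intro i j
    have hnonneg : ∀ i j, 0 ≤ A i j * (v i - v j) ^ 2 := fun i j =>
      mul_nonneg (hA i j) (sq_nonneg _)
    rw [Finset.sum_eq_zero_iff_of_nonneg fun i _ => Finset.sum_nonneg fun j _ => hnonneg i j]
      at hsum
    exact (Finset.sum_eq_zero_iff_of_nonneg fun j _ => hnonneg i j).1 (hsum i (by simp)) j
      (by simp)
  have hadj : ∀ i j, G.Adj i j → v i = v j := fun i j hij => by
    simpa [sub_eq_zero, (hG i j hij).ne'] using hterms i j
  obtain ⟨w⟩ := hconn.preconnected i j
  induction w with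
  | nil => rfl
  | cons hij _ ih => exact (hadj _ _ hij).trans ih

theorem dirichletEnergy_pos (hA : ∀ i j, 0 ≤ A i j) {G : SimpleGraph ι}
    (hG : ∀ i j, G.Adj i j → 0 < A i j) (hconn : G.Connected) {v : ι → ℝ}
    (hsum : ∑ i, v i = 0) (hv : v ≠ 0) : 0 < dirichletEnergy A v := by
  refine (dirichletEnergy_nonneg hA v).lt_of_ne' fun h0 => hv (funext fun i => ?_)
  have hconst := apply_eq_of_dirichletEnergy_eq_zero hA hG hconn h0
  have : (Fintype.card ι : ℝ) * v i = 0 := by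
    rw [← hsum, Finset.sum_congr rfl fun j _ => hconst j i, Finset.sum_const, Finset.card_univ,
      nsmul_eq_mul]
  exact (mul_eq_zero.1 this).resolve_left (Nat.cast_ne_zero.2 (Fintype.card_pos_iff.2 ⟨i⟩).ne')

theorem exists_pos_mul_sum_sq_le_dirichletEnergy (hA : ∀ i j, 0 ≤ A i j) {G : SimpleGraph ι}
    (hG : ∀ i j, G.Adj i j → 0 < A i j) (hconn : G.Connected) :
    ∃ lam > 0, ∀ v : ι → ℝ, ∑ i, v i = 0 → lam * ∑ i, v i ^ 2 ≤ dirichletEnergy A v := by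
  obtain ⟨lam, hlam, hle⟩ := exists_pos_mul_norm_sq_le (E := EuclideanSpace ℝ ι)
    (Q := fun w => dirichletEnergy A w.ofLp) (S := {w | ∑ i, w i = 0})
    ((continuous_dirichletEnergy A).comp (PiLp.continuous_ofLp 2 _))
    (fun c w => dirichletEnergy_smul A c w.ofLp) (isClosed_eq (by fun_prop) continuous_const)
    (fun c w hw => by simp_all [← Finset.mul_sum])
    (fun w hw hw0 => dirichletEnergy_pos hA hG hconn hw (by simpa using hw0))
  refine ⟨lam, hlam, fun v hv => ?_⟩
  simpa [EuclideanSpace.norm_sq_eq] using hle (WithLp.toLp 2 v) hv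

end DirichletEnergy

section Disagreement

variable {ι : Type*} [Fintype ι]

noncomputable def disagreement (v : ι → ℝ) (i : ι) : ℝ :=
  v i - (Fintype.card ι : ℝ)⁻¹ * ∑ j, v j

theorem sum_disagreement (v : ι → ℝ) : ∑ i, disagreement v i = 0 := by
  rcases isEmpty_or_nonempty ι with _ | _
  · simp
  simp [disagreement, Finset.sum_sub_distrib, Finset.card_univ]

theorem disagreement_sub_disagreement (v : ι → ℝ) (i j : ι) :
    disagreement v j - disagreement v i = v j - v i :=
  sub_sub_sub_cancel_right _ _ _

theorem continuous_disagreement (i : ι) : Continuous fun v : ι → ℝ => disagreement v i := by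
  unfold disagreement; fun_prop

theorem sum_disagreement_mul_disagreement (v w : ι → ℝ) :
    ∑ i, disagreement v i * disagreement w i = ∑ i, disagreement v i * w i := by
  have hexpand : ∀ i, disagreement v i * disagreement w i =
      disagreement v i * w i - disagreement v i * ((Fintype.card ι : ℝ)⁻¹ * ∑ j, w j) :=
    fun i => mul_sub _ _ _
  rw [Finset.sum_congr rfl fun i _ => hexpand i, Finset.sum_sub_distrib, ← Finset.sum_mul,
    sum_disagreement, zero_mul, sub_zero]

theorem hasDerivAt_sum_sq_disagreement {x : ℝ → ι → ℝ} {f : ι → ℝ} {t : ℝ}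
    (hx : ∀ i, HasDerivAt (fun s => x s i) (f i) t) :
    HasDerivAt (fun s => ∑ i, disagreement (x s) i ^ 2)
      (2 * ∑ i, disagreement (x t) i * f i) t := by
  have hd : ∀ i, HasDerivAt (fun s => disagreement (x s) i) (disagreement f i) t := fun i =>
    (hx i).fun_sub ((HasDerivAt.fun_sum fun j _ => hx j).const_mul _)
  refine (HasDerivAt.fun_sum fun i _ => (hd i).pow 2).congr_deriv ?_
  rw [← sum_disagreement_mul_disagreement, Finset.mul_sum]
  congr! 1 with i
  ring

end Disagreement

theorem tendsto_disagreement_of_perturbed_consensus_flow {ι : Type*} [Fintype ι] {A : Matrix ι ι ℝ}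
    (hA_symm : ∀ i j, A i j = A j i) (hA_nonneg : ∀ i j, 0 ≤ A i j) {G : SimpleGraph ι}
    (hG : ∀ i j, G.Adj i j → 0 < A i j) (hconn : G.Connected) {K : ℝ} (hK : 0 < K)
    {x u : ℝ → ι → ℝ}
    (hx : ∀ᶠ t in atTop, ∀ i,
      HasDerivAt (fun s => x s i) (K * ∑ j, A i j * (x t j - x t i) + u t i) t)
    (hx_bdd : ∃ C, ∀ᶠ t in atTop, ‖x t‖ ≤ C) (hu : ∀ i, Tendsto (fun t => u t i) atTop (𝓝 0))
    (i : ι) : Tendsto (fun t => disagreement (x t) i) atTop (𝓝 0) := by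
  obtain ⟨lam, hlam, hgap⟩ := exists_pos_mul_sum_sq_le_dirichletEnergy hA_nonneg hG hconn
  obtain ⟨C, hC⟩ := hx_bdd
  set V : ℝ → ℝ := fun t => ∑ i, disagreement (x t) i ^ 2
  set β : ℝ → ℝ := fun t => 2 * ∑ i, disagreement (x t) i * u t i
  have hβ : Tendsto β atTop (𝓝 0) := by
    simpa using (tendsto_finsetSum _ fun i _ => isBoundedUnder_le_mul_tendsto_zero
      (isBoundedUnder_norm_comp_of_eventually_mem (isCompact_closedBall 0 C)
        (continuous_disagreement i).continuousOn
        (hC.mono fun t ht => mem_closedBall_zero_iff.2 ht)) (hu i)).const_mul 2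
  set V' : ℝ → ℝ := fun t =>
    2 * ∑ i, disagreement (x t) i * (K * ∑ j, A i j * (x t j - x t i) + u t i)
  have hV : ∀ᶠ t in atTop, HasDerivAt V (V' t) t ∧ V' t ≤ -(2 * K * lam) * V t + β t := by
    filter_upwards [hx] with t ht
    refine ⟨hasDerivAt_sum_sq_disagreement ht, ?_⟩
    have henergy := sum_mul_sum_sub_eq_neg_dirichletEnergy A hA_symm (disagreement (x t))
    simp only [disagreement_sub_disagreement] at henergy
    have := hgap _ (sum_disagreement (x t))
    simp only [β, V, V', mul_add, Finset.sum_add_distrib, mul_left_comm _ K, ← Finset.mul_sum,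
      henergy]
    nlinarith
  have hV_tendsto := tendsto_zero_of_hasDerivAt_le_neg_mul_add (by positivity) hV
    (Eventually.of_forall fun t => Finset.sum_nonneg fun i _ => sq_nonneg _) hβ
  refine squeeze_zero_norm (fun t => ?_) (by simpa using hV_tendsto.sqrt)
  rw [Real.norm_eq_abs, ← Real.sqrt_sq_eq_abs]
  exact Real.sqrt_le_sqrt (Finset.single_le_sum (fun j _ => sq_nonneg (disagreement (x t) j))
    (Finset.mem_univ i))

theorem flow_achieves_consensus_general
    (N m : ℕ)
    (A : Matrix (Fin N) (Fin N) ℝ)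
    (hAsymm : ∀ i j, A i j = A j i)
    (hAnonneg : ∀ i j, 0 ≤ A i j)
    (G : SimpleGraph (Fin N))
    (hG : ∀ i j, G.Adj i j ↔ i ≠ j ∧ 0 < A i j)
    (hconn : G.Connected)
    (h : Fin N → (Fin m → ℝ)) (z : Fin N → ℝ)
    (K : ℝ) (hK : 0 < K)
    (α : ℝ → ℝ)
    (hα0 : Tendsto α atTop (nhds 0))
    (x : ℝ → Fin N → (Fin m → ℝ))
    (hx : ∀ i, ∀ t ≥ (0:ℝ), HasDerivAt (fun s => x s i)
      (K • (∑ j, A i j • (x t j - x t i)) -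
        α t • ((h i ⬝ᵥ x t i) • h i - z i • h i)) t)
    (hbdd : ∃ C : ℝ, ∀ t ≥ (0:ℝ), ∀ i, ‖x t i‖ ≤ C) :
    ∀ i, Tendsto (fun t => x t i - (N : ℝ)⁻¹ • ∑ j, x t j) atTop (nhds 0) := by
  obtain ⟨C, hC⟩ := hbdd
  have : Nonempty (Fin N) := hconn.nonempty
  intro i
  refine tendsto_pi_nhds.2 fun k => ?_
  set u : ℝ → Fin N → ℝ := fun t j => -(α t * ((h j ⬝ᵥ x t j) * h j k - z j * h j k))
  have hderiv : ∀ᶠ t in atTop, ∀ j,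
      HasDerivAt (fun s => x s j k) (K * ∑ l, A j l * (x t l k - x t j k) + u t j) t := by
    filter_upwards [eventually_ge_atTop 0] with t ht j
    exact (hasDerivAt_pi.1 (hx j t ht) k).congr_deriv
      (by simp only [u, Pi.sub_apply, Pi.smul_apply, smul_eq_mul, Finset.sum_apply]; ring)
  have hbdd_k : ∃ C, ∀ᶠ t in atTop, ‖fun j => x t j k‖ ≤ C := ⟨C, by
    filter_upwards [eventually_ge_atTop 0] with t ht
    exact (pi_norm_le_iff_of_nonempty _).2 fun j => (norm_le_pi_norm (x t j) k).trans (hC t ht j)⟩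
  have hu : ∀ j, Tendsto (fun t => u t j) atTop (𝓝 0) := fun j => by
    simpa using (hα0.zero_mul_isBoundedUnder_le (isBoundedUnder_norm_comp_of_eventually_mem
      (isCompact_closedBall 0 C) (f := fun v => (h j ⬝ᵥ v) * h j k - z j * h j k)
      (by fun_prop : Continuous _).continuousOn ((eventually_ge_atTop 0).mono
        fun t ht => mem_closedBall_zero_iff.2 (hC t ht j)))).neg
  simpa [disagreement, Finset.sum_apply] using
    tendsto_disagreement_of_perturbed_consensus_flow hAsymm hAnonneg
      (fun i j hij => ((hG i j).1 hij).2) hconn hK hderiv hbdd_k hu i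

/-- Consensus: under the distributed flow over a fixed connected graph with
bounded state and `α(t) → 0`, each node's state converges to the network
average, i.e. `x(t) - 1_N ⊗ x̄(t) → 0`. -/
theorem flow_achieves_consensus
    (N m : ℕ)
    (A : Matrix (Fin N) (Fin N) ℝ)
    (hAsymm : ∀ i j, A i j = A j i)
    (hAnonneg : ∀ i j, 0 ≤ A i j)
    (hAdiag : ∀ i, A i i = 0)
    (G : SimpleGraph (Fin N))
    (hG : ∀ i j, G.Adj i j ↔ i ≠ j ∧ 0 < A i j)
    (hconn : G.Connected)
    (h : Fin N → (Fin m → ℝ)) (z : Fin N → ℝ)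
    (K : ℝ) (hK : 0 < K)
    (α : ℝ → ℝ) (hαcont : Continuous α) (hαpos : ∀ t ≥ (0:ℝ), 0 < α t)
    (hα0 : Tendsto α atTop (nhds 0))
    (x : ℝ → Fin N → (Fin m → ℝ))
    (hx : ∀ i, ∀ t ≥ (0:ℝ), HasDerivAt (fun s => x s i)
      (K • (∑ j, A i j • (x t j - x t i)) -
        α t • ((h i ⬝ᵥ x t i) • h i - z i • h i)) t)
    (hbdd : ∃ C : ℝ, ∀ t ≥ (0:ℝ), ∀ i, ‖x t i‖ ≤ C) :
    ∀ i, Tendsto (fun t => x t i - (N : ℝ)⁻¹ • ∑ j, x t j) atTop (nhds 0) :=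
  flow_achieves_consensus_general N m A hAsymm hAnonneg G hG hconn h z K hK α hα0 x hx hbdd
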